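/- For the wheel graph W_n = K_1 + C_{n−1} of order n ≥ 6, edim_f(W_n) = (n−1)/2. -/

import Mathlib

open Finset
open scoped Classical

variable {V : Type*}

/-- Distance from a vertex to an edge: minimum distance to an endpoint. -/
noncomputable def SimpleGraph.edgeDist (G : SimpleGraph V) (e : Sym2 V) (v : V) : ℕ :=
  Sym2.lift ⟨fun a b => min (G.dist a v) (G.dist b v), fun a b => min_comm _ _⟩ e

/-- A set of vertices is an edge resolving set if every pair of distinct edges
is distinguished by some vertex of the set. -/
def SimpleGraph.IsEdgeResolvingSet (G : SimpleGraph V) (S : Set V) : Prop :=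
  ∀ e₁ ∈ G.edgeSet, ∀ e₂ ∈ G.edgeSet, e₁ ≠ e₂ →
    ∃ s ∈ S, G.edgeDist e₁ s ≠ G.edgeDist e₂ s

/-- The edge dimension: minimum cardinality of an edge resolving set. -/
noncomputable def SimpleGraph.edim (G : SimpleGraph V) [Fintype V] : ℕ :=
  sInf {n | ∃ S : Finset V, G.IsEdgeResolvingSet ↑S ∧ S.card = n}

/-- An edge resolving function: a `[0,1]`-valued weighting of the vertices such
that every pair of distinct edges is resolved by total weight at least 1. -/
def SimpleGraph.IsEdgeResolvingFunction (G : SimpleGraph V) [Fintype V] (g : V → ℝ) : Prop :=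
  (∀ v, 0 ≤ g v ∧ g v ≤ 1) ∧
  ∀ e₁ ∈ G.edgeSet, ∀ e₂ ∈ G.edgeSet, e₁ ≠ e₂ →
    1 ≤ ∑ z ∈ Finset.univ.filter (fun z => G.edgeDist e₁ z ≠ G.edgeDist e₂ z), g z

/-- The fractional edge dimension. -/
noncomputable def SimpleGraph.edimf (G : SimpleGraph V) [Fintype V] : ℝ :=
  sInf {x | ∃ g : V → ℝ, G.IsEdgeResolvingFunction g ∧ ∑ v, g v = x}

/-- The wheel graph `W_{m+1} = K₁ + C_m`: hub `none` adjacent to every rim vertex,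
rim vertices forming the cycle `some i ~ some (i+1)`. -/
def wheelGraph (m : ℕ) : SimpleGraph (Option (Fin m)) :=
  SimpleGraph.fromRel (fun a b =>
    match a, b with
    | none, some _ => True
    | some i, some j => (j : ℕ) = ((i : ℕ) + 1) % m
    | _, _ => False)

/-! Every vertex of the wheel is within distance `1` of each spoke, so two consecutive spokes
`v u_i`, `v u_{i+1}` are resolved only by `u_i` and `u_{i+1}`. An edge resolving function thus has
`g u_i + g u_{i+1} ≥ 1` for all `i`, and summing around the rim gives `∑ g ≥ (n - 1) / 2`.
Conversely, two distinct edges are resolved by an endpoint of each that is not on the other; when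
one of these is the hub, the rim vertex two steps beyond the rim edge (available once the rim has at
least five vertices) is at distance `2` from it and resolves instead. Hence weight `1/2` on every
rim vertex is edge resolving. -/

lemma Sym2.exists_mem_notMem_of_ne {α : Type*} {e₁ e₂ : Sym2 α} (he₁ : ¬e₁.IsDiag)
    (hne : e₁ ≠ e₂) : ∃ a ∈ e₁, a ∉ e₂ := by
  induction e₁ using Sym2.ind with
  | _ x y =>
    by_contra! h
    exact hne ((Sym2.mem_and_mem_iff (by simpa using he₁)).mp
      ⟨h x (Sym2.mem_mk_left x y), h y (Sym2.mem_mk_right x y)⟩).symm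

namespace SimpleGraph

variable {G : SimpleGraph V}

lemma edgeDist_mk (a b z : V) : G.edgeDist s(a, b) z = min (G.dist a z) (G.dist b z) := rfl

lemma edgeDist_le_dist_of_mem {e : Sym2 V} {x : V} (hx : x ∈ e) (z : V) :
    G.edgeDist e z ≤ G.dist x z := by
  induction e using Sym2.ind with
  | _ a b =>
    rw [edgeDist_mk]
    rcases Sym2.mem_iff.mp hx with rfl | rfl
    exacts [min_le_left _ _, min_le_right _ _]

lemma edgeDist_eq_zero_iff (hG : G.Preconnected) {e : Sym2 V} {z : V} :
    G.edgeDist e z = 0 ↔ z ∈ e := by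
  induction e using Sym2.ind with
  | _ a b =>
    rw [edgeDist_mk, Nat.min_eq_zero_iff, (hG a z).dist_eq_zero_iff, (hG b z).dist_eq_zero_iff,
      Sym2.mem_iff, eq_comm, @eq_comm _ b]

lemma edgeDist_ne_of_mem_of_notMem (hG : G.Preconnected) {e₁ e₂ : Sym2 V} {z : V}
    (h₁ : z ∈ e₁) (h₂ : z ∉ e₂) : G.edgeDist e₁ z ≠ G.edgeDist e₂ z := by
  rw [← edgeDist_eq_zero_iff hG] at h₁
  rw [← edgeDist_eq_zero_iff hG] at h₂
  omega

lemma mem_iff_notMem_of_edgeDist_ne (hG : G.Preconnected) {e₁ e₂ : Sym2 V} {z : V}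
    (h₁ : G.edgeDist e₁ z ≤ 1) (h₂ : G.edgeDist e₂ z ≤ 1)
    (hz : G.edgeDist e₁ z ≠ G.edgeDist e₂ z) : z ∈ e₁ ↔ z ∉ e₂ := by
  rw [← edgeDist_eq_zero_iff hG, ← edgeDist_eq_zero_iff hG]
  omega

variable [Fintype V] {g : V → ℝ}

lemma IsEdgeResolvingFunction.one_le_add (hg : G.IsEdgeResolvingFunction g)
    {e₁ e₂ : Sym2 V} (he₁ : e₁ ∈ G.edgeSet) (he₂ : e₂ ∈ G.edgeSet) (hne : e₁ ≠ e₂)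
    {a b : V} (hab : a ≠ b) (hres : ∀ z, G.edgeDist e₁ z ≠ G.edgeDist e₂ z → z = a ∨ z = b) :
    1 ≤ g a + g b := by
  calc 1 ≤ ∑ z ∈ univ.filter (fun z => G.edgeDist e₁ z ≠ G.edgeDist e₂ z), g z :=
        hg.2 e₁ he₁ e₂ he₂ hne
    _ ≤ ∑ z ∈ {a, b}, g z :=
        sum_le_sum_of_subset_of_nonneg (fun z hz => by simpa using hres z (by simpa using hz))
          (fun z _ _ => (hg.1 z).1)
    _ = g a + g b := sum_pair hab

lemma isEdgeResolvingFunction_of_exists_pair (hg : ∀ v, 0 ≤ g v ∧ g v ≤ 1)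
    (h : ∀ e₁ ∈ G.edgeSet, ∀ e₂ ∈ G.edgeSet, e₁ ≠ e₂ → ∃ a b, a ≠ b ∧ 1 ≤ g a + g b ∧
      G.edgeDist e₁ a ≠ G.edgeDist e₂ a ∧ G.edgeDist e₁ b ≠ G.edgeDist e₂ b) :
    G.IsEdgeResolvingFunction g := by
  refine ⟨hg, fun e₁ he₁ e₂ he₂ hne => ?_⟩
  obtain ⟨a, b, hab, hgab, ha, hb⟩ := h e₁ he₁ e₂ he₂ hne
  calc 1 ≤ g a + g b := hgab
    _ = ∑ z ∈ {a, b}, g z := (sum_pair hab).symm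
    _ ≤ _ := sum_le_sum_of_subset_of_nonneg (by simp [insert_subset_iff, ha, hb])
          (fun z _ _ => (hg z).1)

end SimpleGraph

namespace wheelGraph

variable {m : ℕ}

lemma adj_none_some (i : Fin m) : (wheelGraph m).Adj none (some i) := by
  simp [wheelGraph]

lemma eq_add_one_or_of_adj [NeZero m] {i j : Fin m} (h : (wheelGraph m).Adj (some i) (some j)) :
    j = i + 1 ∨ i = j + 1 := by
  simp only [wheelGraph, SimpleGraph.fromRel_adj] at h
  simp only [Fin.ext_iff, Fin.val_add, Fin.val_one', Nat.add_mod_mod]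
  exact h.2

lemma preconnected : (wheelGraph m).Preconnected := by
  have hub : ∀ v, (wheelGraph m).Reachable none v := by
    rintro (_ | i)
    exacts [.rfl, (adj_none_some i).reachable]
  exact fun u v => (hub u).symm.trans (hub v)

lemma edgeDist_le_one_of_none_mem {e : Sym2 (Option (Fin m))} (he : none ∈ e)
    (z : Option (Fin m)) : (wheelGraph m).edgeDist e z ≤ 1 := by
  refine (SimpleGraph.edgeDist_le_dist_of_mem he z).trans ?_
  rcases z with _ | i
  · simp
  · exact (SimpleGraph.dist_eq_one_iff_adj.mpr (adj_none_some i)).le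

lemma exists_eq_rim_of_none_notMem [NeZero m] {e : Sym2 (Option (Fin m))}
    (he : e ∈ (wheelGraph m).edgeSet) (hnone : none ∉ e) : ∃ j, e = s(some j, some (j + 1)) := by
  induction e using Sym2.ind with
  | _ a b =>
    rcases a with _ | i
    · simp at hnone
    rcases b with _ | j
    · simp at hnone
    rcases eq_add_one_or_of_adj he with rfl | rfl
    exacts [⟨i, rfl⟩, ⟨j, Sym2.eq_swap⟩]

lemma add_one_ne_self [NeZero m] (hm : 2 ≤ m) (i : Fin m) : i + 1 ≠ i := by
  have h1 : ((1 : Fin m) : ℕ) = 1 := by rw [Fin.val_one']; exact Nat.mod_eq_of_lt (by omega)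
  have := i.isLt
  simp only [ne_eq, Fin.ext_iff, Fin.val_add_eq_ite, h1]
  split_ifs <;> omega

lemma add_three_ne_of_five_le [NeZero m] (hm : 5 ≤ m) (i : Fin m) :
    i + 3 ≠ i ∧ i + 3 ≠ i + 1 ∧ i ≠ i + 3 + 1 ∧ i + 3 ≠ i + 1 + 1 ∧ i + 1 ≠ i + 3 + 1 := by
  have h1 : ((1 : Fin m) : ℕ) = 1 := by rw [Fin.val_one']; exact Nat.mod_eq_of_lt (by omega)
  have h3 : ((3 : Fin m) : ℕ) = 3 := Fin.val_cast_of_lt (n := m) (a := 3) (by omega)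
  have := i.isLt
  simp only [ne_eq, Fin.ext_iff, Fin.val_add_eq_ite, h1, h3]
  split_ifs <;> omega

lemma two_le_edgeDist_add_three [NeZero m] (hm : 5 ≤ m) (j : Fin m) :
    2 ≤ (wheelGraph m).edgeDist s(some j, some (j + 1)) (some (j + 3)) := by
  obtain ⟨h30, h31, h04, h32, h14⟩ := add_three_ne_of_five_le hm j
  have far : ∀ k, j + 3 ≠ k → k ≠ j + 3 + 1 → j + 3 ≠ k + 1 →
      2 ≤ (wheelGraph m).dist (some k) (some (j + 3)) := fun k hne h₁ h₂ =>
    (preconnected _ _).one_lt_dist_of_ne_of_not_adj ((Option.some_injective _).ne hne.symm)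
      fun hadj => (eq_add_one_or_of_adj hadj).elim h₂ h₁
  rw [SimpleGraph.edgeDist_mk]
  exact le_min (far j h30 h04 h31) (far (j + 1) h31 h14 h32)

/-- The spoke `e₁` and the rim edge `e₂` are resolved by `b` and by a rim vertex at distance `2`
from `e₂`, which is at distance at most `1` from every spoke. -/
lemma exists_rim_pair_resolving_spoke_rim [NeZero m] (hm : 5 ≤ m) {e₁ e₂ : Sym2 (Option (Fin m))}
    (he₂ : e₂ ∈ (wheelGraph m).edgeSet) (h₁ : none ∈ e₁) (h₂ : none ∉ e₂) {b : Fin m}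
    (hb₂ : some b ∈ e₂) (hb₁ : some b ∉ e₁) :
    ∃ a b : Fin m, a ≠ b ∧
      (wheelGraph m).edgeDist e₁ (some a) ≠ (wheelGraph m).edgeDist e₂ (some a) ∧
      (wheelGraph m).edgeDist e₁ (some b) ≠ (wheelGraph m).edgeDist e₂ (some b) := by
  obtain ⟨j, rfl⟩ := exists_eq_rim_of_none_notMem he₂ h₂
  have hfar := two_le_edgeDist_add_three hm j
  have hspoke := edgeDist_le_one_of_none_mem h₁ (some (j + 3))
  have hb : (wheelGraph m).edgeDist s(some j, some (j + 1)) (some b) = 0 :=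
    (SimpleGraph.edgeDist_eq_zero_iff preconnected).mpr hb₂
  refine ⟨b, j + 3, ?_, ?_, by omega⟩
  · rintro rfl
    omega
  · exact (SimpleGraph.edgeDist_ne_of_mem_of_notMem preconnected hb₂ hb₁).symm

lemma exists_rim_pair_resolving [NeZero m] (hm : 5 ≤ m) {e₁ e₂ : Sym2 (Option (Fin m))}
    (he₁ : e₁ ∈ (wheelGraph m).edgeSet) (he₂ : e₂ ∈ (wheelGraph m).edgeSet) (hne : e₁ ≠ e₂) :
    ∃ a b : Fin m, a ≠ b ∧
      (wheelGraph m).edgeDist e₁ (some a) ≠ (wheelGraph m).edgeDist e₂ (some a) ∧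
      (wheelGraph m).edgeDist e₁ (some b) ≠ (wheelGraph m).edgeDist e₂ (some b) := by
  obtain ⟨a, ha₁, ha₂⟩ :=
    Sym2.exists_mem_notMem_of_ne (SimpleGraph.not_isDiag_of_mem_edgeSet _ he₁) hne
  obtain ⟨b, hb₂, hb₁⟩ :=
    Sym2.exists_mem_notMem_of_ne (SimpleGraph.not_isDiag_of_mem_edgeSet _ he₂) hne.symm
  rcases a with _ | a <;> rcases b with _ | b
  · exact absurd hb₂ ha₂
  · exact exists_rim_pair_resolving_spoke_rim hm he₂ ha₁ ha₂ hb₂ hb₁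
  · obtain ⟨a', b', hab, ha', hb'⟩ := exists_rim_pair_resolving_spoke_rim hm he₁ hb₂ hb₁ ha₁ ha₂
    exact ⟨a', b', hab, ha'.symm, hb'.symm⟩
  · refine ⟨a, b, by rintro rfl; exact ha₂ hb₂, ?_, ?_⟩
    · exact SimpleGraph.edgeDist_ne_of_mem_of_notMem preconnected ha₁ ha₂
    · exact (SimpleGraph.edgeDist_ne_of_mem_of_notMem preconnected hb₂ hb₁).symm

/-- Two consecutive spokes `v u_i`, `v u_{i+1}` are resolved only by `u_i` and `u_{i+1}`. -/
lemma one_le_add_of_isEdgeResolvingFunction [NeZero m] (hm : 2 ≤ m) {g : Option (Fin m) → ℝ}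
    (hg : (wheelGraph m).IsEdgeResolvingFunction g) (i : Fin m) :
    1 ≤ g (some i) + g (some (i + 1)) := by
  have hi := add_one_ne_self hm i
  have hsome : some i ≠ some (i + 1) := (Option.some_injective _).ne hi.symm
  refine hg.one_le_add (adj_none_some i) (adj_none_some (i + 1))
    (fun h => hsome (Sym2.congr_right.mp h)) hsome fun z hz => ?_
  have := SimpleGraph.mem_iff_notMem_of_edgeDist_ne preconnected
    (edgeDist_le_one_of_none_mem (Sym2.mem_mk_left _ _) z)
    (edgeDist_le_one_of_none_mem (Sym2.mem_mk_left _ _) z) hz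
  simp only [Sym2.mem_iff] at this
  tauto

lemma le_sum_of_isEdgeResolvingFunction [NeZero m] (hm : 2 ≤ m) {g : Option (Fin m) → ℝ}
    (hg : (wheelGraph m).IsEdgeResolvingFunction g) : (m : ℝ) / 2 ≤ ∑ v, g v := by
  have hshift : ∑ i : Fin m, g (some (i + 1)) = ∑ i : Fin m, g (some i) :=
    Fintype.sum_equiv (Equiv.addRight 1) _ _ fun _ => rfl
  have hrim : (m : ℝ) ≤ 2 * ∑ i : Fin m, g (some i) := by
    calc (m : ℝ) = ∑ _i : Fin m, 1 := by simp
      _ ≤ ∑ i : Fin m, (g (some i) + g (some (i + 1))) :=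
          sum_le_sum fun i _ => one_le_add_of_isEdgeResolvingFunction hm hg i
      _ = 2 * ∑ i : Fin m, g (some i) := by rw [sum_add_distrib, hshift, two_mul]
  rw [Fintype.sum_option]
  linarith [(hg.1 none).1]

noncomputable def rimHalf (m : ℕ) : Option (Fin m) → ℝ := fun v => v.elim 0 fun _ => 1 / 2

lemma sum_rimHalf : ∑ v, rimHalf m v = m / 2 := by
  simp [rimHalf, Fintype.sum_option, div_eq_mul_inv]

lemma isEdgeResolvingFunction_rimHalf [NeZero m] (hm : 5 ≤ m) :
    (wheelGraph m).IsEdgeResolvingFunction (rimHalf m) := by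
  refine SimpleGraph.isEdgeResolvingFunction_of_exists_pair
    (fun v => by rcases v with _ | _ <;> norm_num [rimHalf]) fun e₁ he₁ e₂ he₂ hne => ?_
  obtain ⟨a, b, hab, ha, hb⟩ := exists_rim_pair_resolving hm he₁ he₂ hne
  exact ⟨some a, some b, by simpa using hab, by norm_num [rimHalf], ha, hb⟩

lemma edimf_eq [NeZero m] (hm : 5 ≤ m) : (wheelGraph m).edimf = m / 2 :=
  IsLeast.csInf_eq ⟨⟨rimHalf m, isEdgeResolvingFunction_rimHalf hm, sum_rimHalf⟩,
    fun _ ⟨_, hg, hsum⟩ => hsum ▸ le_sum_of_isEdgeResolvingFunction (by omega) hg⟩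

end wheelGraph

/-- For the wheel graph `W_n` of order `n ≥ 6`, `edim_f(W_n) = (n - 1)/2`. -/
theorem stmt_14 (n : ℕ) (hn : 6 ≤ n) :
    (wheelGraph (n - 1)).edimf = ((n : ℝ) - 1) / 2 := by
  have : NeZero (n - 1) := ⟨by omega⟩
  rw [wheelGraph.edimf_eq (by omega), Nat.cast_sub (by omega : 1 ≤ n), Nat.cast_one]
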